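/- Let (γ,v₁,v₂) be a pseudo-spherical spacelike framed curve on I with curvature (α,ℓ,m,n), fix a sign ±, and assume m(s)±n(s) ≠ 0 for all s ∈ I. Then (s₀,λ₀) ∈ I×ℝ is a singular point of the nullcone front NF± (i.e. the differential of NF± at (s₀,λ₀) has rank < 2, equivalently ∂NF±/∂s(s₀,λ₀) and ∂NF±/∂λ(s₀,λ₀) are linearly dependent) if and only if λ₀ = −α(s₀)/(m(s₀)±n(s₀)). -/

import Mathlib

noncomputable section

/-- ℝ⁴ as `Fin 4 → ℝ`, carrying the pseudo-scalar product of index 2. -/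
abbrev R4 : Type := Fin 4 → ℝ

/-- ℝ³ as `Fin 3 → ℝ`. -/
abbrev R3 : Type := Fin 3 → ℝ

/-- The pseudo-scalar product ⟨u,w⟩ = −u₁w₁ − u₂w₂ + u₃w₃ + u₄w₄ of ℝ⁴₂. -/
def pip (u w : R4) : ℝ :=
  -(u 0 * w 0) - u 1 * w 1 + u 2 * w 2 + u 3 * w 3

/-- The anti-de Sitter 3-space AdS³ = {u : ⟨u,u⟩ = −1}. -/
def AdS3 : Set R4 := {u | pip u u = -1}

/-- The 3×3 minor of the rows u,v,w using columns a,b,c. -/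
def minor3 (u v w : R4) (a b c : Fin 4) : ℝ :=
  u a * (v b * w c - v c * w b) - u b * (v a * w c - v c * w a)
    + u c * (v a * w b - v b * w a)

/-- The triple product u×v×w in ℝ⁴₂, the formal determinant with first row
(−e₁,−e₂,e₃,e₄). -/
def trip (u v w : R4) : R4 :=
  ![-(minor3 u v w 1 2 3), minor3 u v w 0 2 3, minor3 u v w 0 1 3,
    -(minor3 u v w 0 1 2)]

/-- A pseudo-spherical spacelike framed curve on `I` with sign `ε`. -/
structure IsFramedCurve (I : Set ℝ) (γ v₁ v₂ : ℝ → R4) (ε : ℝ) : Prop where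
  eps : ε = 1 ∨ ε = -1
  smooth_γ : ContDiffOn ℝ (⊤ : ℕ∞) γ I
  smooth_v₁ : ContDiffOn ℝ (⊤ : ℕ∞) v₁ I
  smooth_v₂ : ContDiffOn ℝ (⊤ : ℕ∞) v₂ I
  mem_ads : ∀ s ∈ I, γ s ∈ AdS3
  norm_v₁ : ∀ s ∈ I, pip (v₁ s) (v₁ s) = ε
  norm_v₂ : ∀ s ∈ I, pip (v₂ s) (v₂ s) = -ε
  orth_v₁v₂ : ∀ s ∈ I, pip (v₁ s) (v₂ s) = 0
  orth_γv₁ : ∀ s ∈ I, pip (γ s) (v₁ s) = 0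
  orth_γv₂ : ∀ s ∈ I, pip (γ s) (v₂ s) = 0
  tang_v₁ : ∀ s ∈ I, pip (deriv γ s) (v₁ s) = 0
  tang_v₂ : ∀ s ∈ I, pip (deriv γ s) (v₂ s) = 0

/-- μ(s) = γ(s)×v₁(s)×v₂(s). -/
def muF (γ v₁ v₂ : ℝ → R4) (s : ℝ) : R4 := trip (γ s) (v₁ s) (v₂ s)

/-- α(s) = ⟨γ′(s), μ(s)⟩. -/
def curvA (γ v₁ v₂ : ℝ → R4) (s : ℝ) : ℝ := pip (deriv γ s) (muF γ v₁ v₂ s)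

/-- ℓ(s) = −ε⟨v₁′(s), v₂(s)⟩. -/
def curvL (ε : ℝ) (v₁ v₂ : ℝ → R4) (s : ℝ) : ℝ := -ε * pip (deriv v₁ s) (v₂ s)

/-- m(s) = ⟨v₁′(s), μ(s)⟩. -/
def curvM (γ v₁ v₂ : ℝ → R4) (s : ℝ) : ℝ := pip (deriv v₁ s) (muF γ v₁ v₂ s)

/-- n(s) = ⟨v₂′(s), μ(s)⟩. -/
def curvN (γ v₁ v₂ : ℝ → R4) (s : ℝ) : ℝ := pip (deriv v₂ s) (muF γ v₁ v₂ s)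

/-- The nullcone front NF±(s,λ) = γ(s) + λ(v₁(s) ± v₂(s)), with sign `e = ±1`. -/
def NF (γ v₁ v₂ : ℝ → R4) (e : ℝ) (q : ℝ × ℝ) : R4 :=
  γ q.1 + q.2 • (v₁ q.1 + e • v₂ q.1)

/-- The function σ± of Theorem 4.3, with sign `e = ±1`. -/
def sigmaF (γ v₁ v₂ : ℝ → R4) (ε e : ℝ) (s : ℝ) : ℝ :=
  curvA γ v₁ v₂ s *
      (-(deriv (curvM γ v₁ v₂) s + e * deriv (curvN γ v₁ v₂) s)
        + curvL ε v₁ v₂ s * (curvN γ v₁ v₂ s + e * curvM γ v₁ v₂ s))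
    + deriv (curvA γ v₁ v₂) s * (curvM γ v₁ v₂ s + e * curvN γ v₁ v₂ s)

/-- A point is a singular point of `f : ℝ×ℝ → ℝ⁴₂` when the two partial
derivatives are linearly dependent (the differential has rank < 2). -/
def SingularAt (f : ℝ × ℝ → R4) (q : ℝ × ℝ) : Prop :=
  ¬ LinearIndependent ℝ
      ![deriv (fun t => f (t, q.2)) q.1, deriv (fun l => f (q.1, l)) q.2]

/-- The cuspidal edge model CE(u,v) = (u², u³, v). -/
def CE : ℝ × ℝ → R3 := fun q => ![q.1 ^ 2, q.1 ^ 3, q.2]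

/-- The swallowtail model SW(u,v) = (3u⁴+u²v, 4u³+2uv, v). -/
def SW : ℝ × ℝ → R3 :=
  fun q => ![3 * q.1 ^ 4 + q.1 ^ 2 * q.2, 4 * q.1 ^ 3 + 2 * q.1 * q.2, q.2]

/-- `f` (a map into AdS³) is locally diffeomorphic at `p` to the model `g` at `0`:
there are a smooth diffeomorphism `φ` from a neighborhood `U` of `0` in ℝ² onto a
neighborhood `V` of `p` with `φ 0 = p`, and a smooth diffeomorphism `Ψ` from a
neighborhood `W` of `f p` in the submanifold AdS³ onto an open set `W'` of ℝ³
with `Ψ (f p) = g 0`, such that `Ψ ∘ f ∘ φ = g` near `0`. -/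
def LocallyDiffeoAt (f : ℝ × ℝ → R4) (p : ℝ × ℝ) (g : ℝ × ℝ → R3) : Prop :=
  ∃ (U V : Set (ℝ × ℝ)) (φ φinv : ℝ × ℝ → ℝ × ℝ)
    (W : Set R4) (W' : Set R3) (Ψ : R4 → R3) (Ψinv : R3 → R4),
    IsOpen U ∧ (0 : ℝ × ℝ) ∈ U ∧ IsOpen V ∧ p ∈ V ∧
    ContDiffOn ℝ (⊤ : ℕ∞) φ U ∧ Set.BijOn φ U V ∧ φ 0 = p ∧
    ContDiffOn ℝ (⊤ : ℕ∞) φinv V ∧ (∀ x ∈ U, φinv (φ x) = x) ∧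
    (∃ O : Set R4, IsOpen O ∧ W = O ∩ AdS3) ∧ f p ∈ W ∧ IsOpen W' ∧
    ContDiffOn ℝ (⊤ : ℕ∞) Ψ W ∧ Set.BijOn Ψ W W' ∧ Ψ (f p) = g 0 ∧
    ContDiffOn ℝ (⊤ : ℕ∞) Ψinv W' ∧ (∀ y ∈ W, Ψinv (Ψ y) = y) ∧
    (∀ x ∈ U, f (φ x) ∈ W) ∧ (∀ x ∈ U, Ψ (f (φ x)) = g x)

/-- The anti-de Sitter distance-squared function d_{v₀}(s) = ⟨γ(s)−v₀, γ(s)−v₀⟩. -/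
def dSq (γ : ℝ → R4) (v₀ : R4) (s : ℝ) : ℝ := pip (γ s - v₀) (γ s - v₀)



section Aux

lemma pip_comm (u v : R4) : pip u v = pip v u := by simp only [pip]; ring

lemma pip_expand (x y z u : R4) (c d : ℝ) :
    pip (x + c • (y + d • z)) u = pip x u + c * (pip y u + d * pip z u) := by
  simp only [pip, Pi.add_apply, Pi.smul_apply, smul_eq_mul]; ring

lemma pip_add_smul (x z u : R4) (d : ℝ) :
    pip (x + d • z) u = pip x u + d * pip z u := by
  simp only [pip, Pi.add_apply, Pi.smul_apply, smul_eq_mul]; ring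

lemma pip_sub_smul (x y u : R4) (t : ℝ) :
    pip (x - t • y) u = pip x u - t * pip y u := by
  simp only [pip, Pi.sub_apply, Pi.smul_apply, smul_eq_mul]; ring

lemma pip_smul_left (a : ℝ) (x u : R4) : pip (a • x) u = a * pip x u := by
  simp only [pip, Pi.smul_apply, smul_eq_mul]; ring

lemma pip_trip₁ (u v w : R4) : pip (trip u v w) u = 0 := by
  simp [pip, trip, minor3]; ring

lemma pip_trip₂ (u v w : R4) : pip (trip u v w) v = 0 := by
  simp [pip, trip, minor3]; ring

lemma pip_trip₃ (u v w : R4) : pip (trip u v w) w = 0 := by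
  simp [pip, trip, minor3]; ring

lemma hasDerivAt_pip {a b : ℝ → R4} {a' b' : R4} {s : ℝ}
    (ha : HasDerivAt a a' s) (hb : HasDerivAt b b' s) :
    HasDerivAt (fun t => pip (a t) (b t)) (pip a' (b s) + pip (a s) b') s := by
  have hA := hasDerivAt_pi.mp ha
  have hB := hasDerivAt_pi.mp hb
  have H := ((((hA 0).mul (hB 0)).neg.sub ((hA 1).mul (hB 1))).add
      ((hA 2).mul (hB 2))).add ((hA 3).mul (hB 3))
  have hval : pip a' (b s) + pip (a s) b' =
      -(a' 0 * b s 0 + a s 0 * b' 0) - (a' 1 * b s 1 + a s 1 * b' 1)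
        + (a' 2 * b s 2 + a s 2 * b' 2) + (a' 3 * b s 3 + a s 3 * b' 3) := by
    simp only [pip]; ring
  rw [hval]
  exact H

end Aux

set_option maxHeartbeats 1000000 in
lemma det_fin_four' (A : Matrix (Fin 4) (Fin 4) ℝ) :
    A.det = A 0 0 * (A 1 1 * (A 2 2 * A 3 3 - A 2 3 * A 3 2)
        - A 1 2 * (A 2 1 * A 3 3 - A 2 3 * A 3 1)
        + A 1 3 * (A 2 1 * A 3 2 - A 2 2 * A 3 1))
      - A 0 1 * (A 1 0 * (A 2 2 * A 3 3 - A 2 3 * A 3 2)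
        - A 1 2 * (A 2 0 * A 3 3 - A 2 3 * A 3 0)
        + A 1 3 * (A 2 0 * A 3 2 - A 2 2 * A 3 0))
      + A 0 2 * (A 1 0 * (A 2 1 * A 3 3 - A 2 3 * A 3 1)
        - A 1 1 * (A 2 0 * A 3 3 - A 2 3 * A 3 0)
        + A 1 3 * (A 2 0 * A 3 1 - A 2 1 * A 3 0))
      - A 0 3 * (A 1 0 * (A 2 1 * A 3 2 - A 2 2 * A 3 1)
        - A 1 1 * (A 2 0 * A 3 2 - A 2 2 * A 3 0)
        + A 1 2 * (A 2 0 * A 3 1 - A 2 1 * A 3 0)) := by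
  rw [Matrix.det_succ_row_zero]
  simp [Fin.sum_univ_succ, Matrix.det_fin_three, Matrix.submatrix_apply, Fin.succAbove,
    show (2 : Fin 3).succ = 3 from rfl, show Fin.castSucc (2 : Fin 3) = 2 from rfl,
    show (1 : Fin 3).succ = 2 from rfl, show (0 : Fin 3).succ = 1 from rfl]
  ring

set_option maxHeartbeats 2000000 in
lemma frame_nondeg (u0 u1 u2 : R4) (ε : ℝ) (hε2 : ε ^ 2 = 1)
    (h00 : pip u0 u0 = -1) (h11 : pip u1 u1 = ε) (h22 : pip u2 u2 = -ε)
    (h01 : pip u0 u1 = 0) (h02 : pip u0 u2 = 0) (h12 : pip u1 u2 = 0)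
    (w : R4) (hw0 : pip u0 w = 0) (hw1 : pip u1 w = 0) (hw2 : pip u2 w = 0)
    (hw3 : pip (trip u0 u1 u2) w = 0) : w = 0 := by
  set μ : R4 := trip u0 u1 u2 with hμ
  set M : Matrix (Fin 4) (Fin 4) ℝ :=
    Matrix.of ![![-(u0 0), -(u0 1), u0 2, u0 3],
                ![-(u1 0), -(u1 1), u1 2, u1 3],
                ![-(u2 0), -(u2 1), u2 2, u2 3],
                ![-(μ 0), -(μ 1), μ 2, μ 3]] with hM
  have hdet : M.det =
      -(pip u0 u0 * (pip u1 u1 * pip u2 u2 - pip u1 u2 * pip u1 u2)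
        - pip u0 u1 * (pip u0 u1 * pip u2 u2 - pip u1 u2 * pip u0 u2)
        + pip u0 u2 * (pip u0 u1 * pip u1 u2 - pip u1 u1 * pip u0 u2)) := by
    rw [det_fin_four']
    simp [hM, hμ, trip, minor3, pip]
    ring
  have hdetne : M.det ≠ 0 := by
    rw [hdet, h00, h11, h22, h01, h02, h12]
    intro hcon
    nlinarith [hε2]
  have hMw : M.mulVec w = 0 := by
    have hw0' := hw0; have hw1' := hw1; have hw2' := hw2; have hw3' := hw3
    simp only [pip] at hw0' hw1' hw2' hw3'
    funext i
    fin_cases i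
    · show M.mulVec w 0 = 0
      simp [hM, Matrix.mulVec, dotProduct, Fin.sum_univ_four]
      linear_combination hw0'
    · show M.mulVec w 1 = 0
      simp [hM, Matrix.mulVec, dotProduct, Fin.sum_univ_four]
      linear_combination hw1'
    · show M.mulVec w 2 = 0
      simp [hM, Matrix.mulVec, dotProduct, Fin.sum_univ_four]
      linear_combination hw2'
    · show M.mulVec w 3 = 0
      simp [hM, Matrix.mulVec, dotProduct, Fin.sum_univ_four]
      linear_combination hw3'
  exact Matrix.eq_zero_of_mulVec_eq_zero hdetne hMw

/-- Characterization of the singular points of the nullcone front. -/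
theorem nullcone_front_singular_iff
    (I : Set ℝ) (hIopen : IsOpen I) (hIconn : I.OrdConnected)
    (γ v₁ v₂ : ℝ → R4) (ε : ℝ) (h : IsFramedCurve I γ v₁ v₂ ε)
    (e : ℝ) (he : e = 1 ∨ e = -1)
    (hmn : ∀ s ∈ I, curvM γ v₁ v₂ s + e * curvN γ v₁ v₂ s ≠ 0)
    (s₀ : ℝ) (hs₀ : s₀ ∈ I) (lam₀ : ℝ) :
    SingularAt (NF γ v₁ v₂ e) (s₀, lam₀) ↔
      lam₀ = -curvA γ v₁ v₂ s₀ / (curvM γ v₁ v₂ s₀ + e * curvN γ v₁ v₂ s₀) := by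
  have hεsq : ε ^ 2 = 1 := by rcases h.eps with hh | hh <;> rw [hh] <;> norm_num
  have hesq : e ^ 2 = 1 := by rcases he with hh | hh <;> rw [hh] <;> norm_num
  have hεne : ε ≠ 0 := by rcases h.eps with hh | hh <;> rw [hh] <;> norm_num
  have hnI : I ∈ nhds s₀ := hIopen.mem_nhds hs₀
  -- derivatives of the frame
  have hdγ : HasDerivAt γ (deriv γ s₀) s₀ :=
    (((h.smooth_γ.contDiffAt hnI).differentiableAt (by simp))).hasDerivAt
  have hdv₁ : HasDerivAt v₁ (deriv v₁ s₀) s₀ :=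
    (((h.smooth_v₁.contDiffAt hnI).differentiableAt (by simp))).hasDerivAt
  have hdv₂ : HasDerivAt v₂ (deriv v₂ s₀) s₀ :=
    (((h.smooth_v₂.contDiffAt hnI).differentiableAt (by simp))).hasDerivAt
  -- the two partial derivatives of NF
  have hA : HasDerivAt (fun t => NF γ v₁ v₂ e (t, lam₀))
      (deriv γ s₀ + lam₀ • (deriv v₁ s₀ + e • deriv v₂ s₀)) s₀ := by
    have := hdγ.add ((hdv₁.add (hdv₂.const_smul e)).const_smul lam₀)
    simpa [NF, Pi.add_def] using this
  have hB : HasDerivAt (fun l => NF γ v₁ v₂ e (s₀, l)) (v₁ s₀ + e • v₂ s₀) lam₀ := by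
    have h1 : HasDerivAt (fun l : ℝ => l • (v₁ s₀ + e • v₂ s₀))
        ((1 : ℝ) • (v₁ s₀ + e • v₂ s₀)) lam₀ := (hasDerivAt_id lam₀).smul_const _
    have := (hasDerivAt_const lam₀ (γ s₀)).add h1
    simpa [NF, Pi.add_def] using this
  set A : R4 := deriv γ s₀ + lam₀ • (deriv v₁ s₀ + e • deriv v₂ s₀) with hAdef
  set B : R4 := v₁ s₀ + e • v₂ s₀ with hBdef
  set μ : R4 := muF γ v₁ v₂ s₀ with hμdef
  have hsing : SingularAt (NF γ v₁ v₂ e) (s₀, lam₀) ↔ ¬ LinearIndependent ℝ ![A, B] := by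
    unfold SingularAt
    rw [show deriv (fun t => NF γ v₁ v₂ e (t, (s₀, lam₀).2)) (s₀, lam₀).1 = A from hA.deriv,
      show deriv (fun l => NF γ v₁ v₂ e ((s₀, lam₀).1, l)) (s₀, lam₀).2 = B from hB.deriv]
  -- derivative relations from constancy of the pip relations on I
  have hconst : ∀ (a b : ℝ → R4) (c : ℝ), HasDerivAt a (deriv a s₀) s₀ →
      HasDerivAt b (deriv b s₀) s₀ → (∀ s ∈ I, pip (a s) (b s) = c) →
      pip (deriv a s₀) (b s₀) + pip (a s₀) (deriv b s₀) = 0 := by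
    intro a b c ha hb hc
    have hev : (fun t => pip (a t) (b t)) =ᶠ[nhds s₀] fun _ => c := by
      filter_upwards [hnI] with t ht using hc t ht
    exact (hasDerivAt_pip ha hb).unique
      ((hasDerivAt_const s₀ c).congr_of_eventuallyEq hev)
  have hγγ : pip (deriv γ s₀) (γ s₀) = 0 := by
    have := hconst γ γ (-1) hdγ hdγ (fun s hs => h.mem_ads s hs)
    have h2 := pip_comm (γ s₀) (deriv γ s₀)
    linarith
  have hγv₁ : pip (γ s₀) (deriv v₁ s₀) = 0 := by
    have := hconst γ v₁ 0 hdγ hdv₁ h.orth_γv₁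
    have h2 := h.tang_v₁ s₀ hs₀
    have h3 := pip_comm (deriv γ s₀) (v₁ s₀)
    linarith
  have hγv₂ : pip (γ s₀) (deriv v₂ s₀) = 0 := by
    have := hconst γ v₂ 0 hdγ hdv₂ h.orth_γv₂
    have h2 := h.tang_v₂ s₀ hs₀
    have h3 := pip_comm (deriv γ s₀) (v₂ s₀)
    linarith
  have hv₁v₁ : pip (deriv v₁ s₀) (v₁ s₀) = 0 := by
    have := hconst v₁ v₁ ε hdv₁ hdv₁ h.norm_v₁
    have h2 := pip_comm (v₁ s₀) (deriv v₁ s₀)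
    linarith
  have hv₂v₂ : pip (deriv v₂ s₀) (v₂ s₀) = 0 := by
    have := hconst v₂ v₂ (-ε) hdv₂ hdv₂ h.norm_v₂
    have h2 := pip_comm (v₂ s₀) (deriv v₂ s₀)
    linarith
  set pL : ℝ := pip (deriv v₁ s₀) (v₂ s₀) with hpL
  have hv₂v₁ : pip (deriv v₂ s₀) (v₁ s₀) = -pL := by
    have := hconst v₁ v₂ 0 hdv₁ hdv₂ h.orth_v₁v₂
    have h2 := pip_comm (v₁ s₀) (deriv v₂ s₀)
    linarith
  -- pip values against the frame
  have hμ₁ : pip μ (γ s₀) = 0 := pip_trip₁ _ _ _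
  have hμ₂ : pip μ (v₁ s₀) = 0 := pip_trip₂ _ _ _
  have hμ₃ : pip μ (v₂ s₀) = 0 := pip_trip₃ _ _ _
  have hAμ : pip A μ = curvA γ v₁ v₂ s₀
      + lam₀ * (curvM γ v₁ v₂ s₀ + e * curvN γ v₁ v₂ s₀) := by
    rw [hAdef, pip_expand]; rfl
  have hBμ : pip B μ = 0 := by
    rw [hBdef, pip_add_smul, pip_comm (v₁ s₀) μ, pip_comm (v₂ s₀) μ, hμ₂, hμ₃]; ring
  have hBv₁ : pip B (v₁ s₀) = ε := by
    rw [hBdef, pip_add_smul, h.norm_v₁ s₀ hs₀, pip_comm (v₂ s₀) (v₁ s₀),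
      h.orth_v₁v₂ s₀ hs₀]; ring
  have hBv₂ : pip B (v₂ s₀) = -(e * ε) := by
    rw [hBdef, pip_add_smul, h.orth_v₁v₂ s₀ hs₀, h.norm_v₂ s₀ hs₀]; ring
  have hBγ : pip B (γ s₀) = 0 := by
    rw [hBdef, pip_add_smul, pip_comm (v₁ s₀) (γ s₀), pip_comm (v₂ s₀) (γ s₀),
      h.orth_γv₁ s₀ hs₀, h.orth_γv₂ s₀ hs₀]; ring
  have hBne : B ≠ 0 := by
    intro h0
    rw [h0] at hBv₁
    simp [pip] at hBv₁
    exact hεne hBv₁.symm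
  have hAv₁ : pip A (v₁ s₀) = -(lam₀ * e * pL) := by
    rw [hAdef, pip_expand, h.tang_v₁ s₀ hs₀, hv₁v₁, hv₂v₁]; ring
  have hAv₂ : pip A (v₂ s₀) = lam₀ * pL := by
    rw [hAdef, pip_expand, h.tang_v₂ s₀ hs₀, hv₂v₂, ← hpL]; ring
  have hAγ : pip A (γ s₀) = 0 := by
    rw [hAdef, pip_expand, hγγ, pip_comm (deriv v₁ s₀) (γ s₀),
      pip_comm (deriv v₂ s₀) (γ s₀), hγv₁, hγv₂]; ring
  rw [hsing]
  constructor
  · intro hdep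
    rw [linearIndependent_fin2] at hdep
    push_neg at hdep
    simp only [Matrix.cons_val_one, Matrix.head_cons, Matrix.cons_val_zero] at hdep
    obtain ⟨a, ha⟩ := hdep hBne
    have hz : pip A μ = 0 := by
      rw [← ha, pip_smul_left, hBμ]; ring
    rw [hAμ] at hz
    rw [eq_div_iff (hmn s₀ hs₀)]
    linarith
  · intro hlam
    have hc : pip A μ = 0 := by
      rw [hAμ, hlam]
      rw [div_mul_cancel₀ _ (hmn s₀ hs₀)]
      ring
    set t : ℝ := -(lam₀ * e * pL * ε) with ht
    have hw : A - t • B = 0 := by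
      apply frame_nondeg (γ s₀) (v₁ s₀) (v₂ s₀) ε hεsq (h.mem_ads s₀ hs₀)
        (h.norm_v₁ s₀ hs₀) (h.norm_v₂ s₀ hs₀) (h.orth_γv₁ s₀ hs₀) (h.orth_γv₂ s₀ hs₀)
        (h.orth_v₁v₂ s₀ hs₀)
      · rw [pip_comm, pip_sub_smul, hAγ, hBγ]; ring
      · rw [pip_comm, pip_sub_smul, hAv₁, hBv₁, ht]; linear_combination (lam₀ * e * pL) * hεsq
      · rw [pip_comm, pip_sub_smul, hAv₂, hBv₂, ht]; linear_combination (-(lam₀ * pL)) * hεsq + (-(lam₀ * pL * ε ^ 2)) * hesq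
      · show pip (trip (γ s₀) (v₁ s₀) (v₂ s₀)) (A - t • B) = 0
        have hμtrip : trip (γ s₀) (v₁ s₀) (v₂ s₀) = μ := rfl
        rw [hμtrip, pip_comm, pip_sub_smul, hc, hBμ]; ring
    have hAtB : A = t • B := by rwa [sub_eq_zero] at hw
    intro hLI
    rw [linearIndependent_fin2] at hLI
    exact hLI.2 t (by simp only [Matrix.cons_val_one, Matrix.head_cons,
      Matrix.cons_val_zero]; exact hAtB.symm)
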